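/- Suppose V : (0,∞) → ℝ is twice differentiable, V(S) > 0 for all S > 0, V solves the perpetual American put variational inequality, and V(S) → E as S → 0⁺. Then there exists an optimal exercise boundary: a number S₀ ∈ [0, E] such that V(S) = max(E−S, 0) for all 0 < S < S₀ and V(S) > max(E−S, 0) for all S > S₀. -/

import Mathlib

/-!
Write `W S = V S - (E - S)` for the excess of `V` over the payoff on `(0, E)`. At a point of
contact (`W c = 0`, a local minimum of `W ≥ 0`) we get `V' c = -1`, `V'' c ≥ 0`, and `(−LV)(c) ≥ 0`
becomes `q c ≤ r E`. If `W` were positive somewhere left of `c`, then, since `W → 0` at `0⁺`, it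
would have a positive interior maximum `m < c`, where `V' m = -1`, `V'' m ≤ 0` and `(−LV)(m) = 0`
force `r E < q m ≤ q c`. Hence the contact set is an initial segment of `(0, E)`, and `S₀` is its
supremum.
-/

/-- The Black–Scholes ordinary differential operator `(−LV)(S)`,
expressed via explicitly given first and second derivative functions. -/
noncomputable def negL (r q σ : ℝ) (V V' V'' : ℝ → ℝ) (S : ℝ) : ℝ :=
  -(σ ^ 2 / 2) * S ^ 2 * V'' S - (r - q) * S * V' S + r * V S

open Set Filter Topology

theorem IsLocalMax.nonpos_of_hasDerivAt_of_hasDerivAt {f f' : ℝ → ℝ} {f'' x : ℝ}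
    (h : IsLocalMax f x) (hf : ∀ᶠ y in 𝓝 x, HasDerivAt f (f' y) y) (hf' : HasDerivAt f' f'' x) :
    f'' ≤ 0 := by
  have hdd : deriv (deriv f) x = f'' := by
    have hderiv : deriv f =ᶠ[𝓝 x] f' := hf.mono fun y hy => hy.deriv
    rw [hderiv.deriv_eq]
    exact hf'.deriv
  by_contra! hpos
  rw [← hdd] at hpos
  -- A positive second derivative makes `x` a local minimum too, so `f` is locally constant.
  have hmin := isLocalMin_of_deriv_deriv_pos hpos h.deriv_eq_zero hf.self_of_nhds.continuousAt
  have hconst : f =ᶠ[𝓝 x] fun _ => f x := (h.and hmin).mono fun y hy => le_antisymm hy.1 hy.2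
  have hderiv : deriv f =ᶠ[𝓝 x] fun _ => 0 :=
    hconst.eventually_nhds.mono fun y (hy : f =ᶠ[𝓝 y] _) => by rw [hy.deriv_eq, deriv_const]
  rw [hderiv.deriv_eq, deriv_const] at hpos
  exact hpos.false

theorem IsLocalMin.nonneg_of_hasDerivAt_of_hasDerivAt {f f' : ℝ → ℝ} {f'' x : ℝ}
    (h : IsLocalMin f x) (hf : ∀ᶠ y in 𝓝 x, HasDerivAt f (f' y) y) (hf' : HasDerivAt f' f'' x) :
    0 ≤ f'' := by
  simpa using h.neg.nonpos_of_hasDerivAt_of_hasDerivAt (hf.mono fun y hy => hy.neg) hf'.neg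

theorem exists_isLocalMax_Ioo_of_tendsto_nhdsGT {f : ℝ → ℝ} {a b c l : ℝ} (hab : a < b)
    (hbc : b < c) (hf : ContinuousOn f (Ioc a c)) (ha : Tendsto f (𝓝[>] a) (𝓝 l))
    (hl : l < f b) (hc : f c < f b) : ∃ m ∈ Ioo a c, IsLocalMax f m ∧ f b ≤ f m := by
  obtain ⟨ε, hεf, hε⟩ := ((ha.eventually_lt_const hl).and (Ioo_mem_nhdsGT hab)).exists
  have hends : ∀ z ∈ Icc ε c \ Ioo ε c, f z < f b := by
    rw [Icc_sdiff_Ioo_same (hε.2.trans hbc).le]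
    rintro z (rfl | rfl)
    exacts [hεf, hc]
  obtain ⟨m, hm, hmax⟩ := isCompact_Icc.exists_isMaxOn_mem_subset
    (hf.mono (Icc_subset_Ioc hε.1 le_rfl)) ⟨hε.2.le, hbc.le⟩ hends
  exact ⟨m, ⟨hε.1.trans hm.1, hm.2⟩, hmax.isLocalMax (Icc_mem_nhds hm.1 hm.2),
    hmax ⟨hε.2.le, hbc.le⟩⟩

theorem exists_Ioo_subset_subset_Iic {C : Set ℝ} {a b : ℝ} (hab : a ≤ b) (hC : C ⊆ Icc a b)
    (hdown : ∀ y ∈ C, ∀ x, a < x → x < y → x ∈ C) :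
    ∃ s ∈ Icc a b, Ioo a s ⊆ C ∧ C ⊆ Iic s := by
  have hbdd : BddAbove (insert a C) := ⟨b, forall_mem_insert.2 ⟨hab, fun y hy => (hC hy).2⟩⟩
  refine ⟨sSup (insert a C), ⟨le_csSup hbdd (mem_insert a C), ?_⟩, ?_, ?_⟩
  · exact csSup_le (insert_nonempty a C) (forall_mem_insert.2 ⟨hab, fun y hy => (hC hy).2⟩)
  · rintro x ⟨hax, hxs⟩
    obtain ⟨y, hy, hxy⟩ := exists_lt_of_lt_csSup (insert_nonempty a C) hxs
    rcases hy with rfl | hy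
    · exact absurd hax hxy.not_gt
    · exact hdown y hy x hax hxy
  · exact fun y hy => le_csSup hbdd (mem_insert_of_mem a hy)

namespace PerpetualPut

variable {r q σ E : ℝ} {V V' V'' : ℝ → ℝ}

theorem negL_of_deriv_eq_neg_one {S : ℝ} (h : V' S = -1) :
    negL r q σ V V' V'' S =
      -(σ ^ 2 / 2) * S ^ 2 * V'' S + r * (V S - (E - S)) + (r * E - q * S) := by
  rw [negL, h]
  ring

section VariationalInequality

variable {S : ℝ} (hVI : min (negL r q σ V V' V'' S) (V S - max (E - S) 0) = 0)
include hVI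

theorem payoff_le : max (E - S) 0 ≤ V S :=
  sub_nonneg.1 (le_min_iff.1 hVI.ge).2

theorem negL_nonneg : 0 ≤ negL r q σ V V' V'' S :=
  (le_min_iff.1 hVI.ge).1

theorem negL_eq_zero_of_payoff_lt (h : max (E - S) 0 < V S) : negL r q σ V V' V'' S = 0 :=
  ((min_eq_iff.1 hVI).resolve_right fun h' => (sub_pos.2 h).ne' h'.1).1

end VariationalInequality

section Derivatives

variable (hV' : ∀ S : ℝ, 0 < S → HasDerivAt V (V' S) S)
  (hV'' : ∀ S : ℝ, 0 < S → HasDerivAt V' (V'' S) S)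

include hV' in
theorem eventually_hasDerivAt_sub_payoff {S : ℝ} (hS : 0 < S) :
    ∀ᶠ x in 𝓝 S, HasDerivAt (fun x => V x - (E - x)) (V' x + 1) x :=
  (eventually_gt_nhds hS).mono fun x hx => by
    have h := (hV' x hx).sub ((hasDerivAt_id x).const_sub E)
    rwa [sub_neg_eq_add] at h

include hV' hV''

theorem le_of_isLocalMin_sub_payoff {c : ℝ} (hc : 0 < c)
    (hmin : IsLocalMin (fun x => V x - (E - x)) c) (hcV : V c = E - c)
    (hL : 0 ≤ negL r q σ V V' V'' c) : q * c ≤ r * E := by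
  have hd := eventually_hasDerivAt_sub_payoff (E := E) hV' hc
  have hV'c : V' c = -1 := by linarith [hmin.hasDerivAt_eq_zero hd.self_of_nhds]
  have hV''c : 0 ≤ V'' c := hmin.nonneg_of_hasDerivAt_of_hasDerivAt hd ((hV'' c hc).add_const 1)
  rw [negL_of_deriv_eq_neg_one (E := E) hV'c, hcV] at hL
  nlinarith [mul_nonneg (by positivity : 0 ≤ σ ^ 2 / 2 * c ^ 2) hV''c]

theorem lt_of_isLocalMax_sub_payoff {m : ℝ} (hr : 0 < r) (hm : 0 < m)
    (hmax : IsLocalMax (fun x => V x - (E - x)) m) (hmV : E - m < V m)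
    (hL : negL r q σ V V' V'' m = 0) : r * E < q * m := by
  have hd := eventually_hasDerivAt_sub_payoff (E := E) hV' hm
  have hV'm : V' m = -1 := by linarith [hmax.hasDerivAt_eq_zero hd.self_of_nhds]
  have hV''m : V'' m ≤ 0 := hmax.nonpos_of_hasDerivAt_of_hasDerivAt hd ((hV'' m hm).add_const 1)
  rw [negL_of_deriv_eq_neg_one (E := E) hV'm] at hL
  nlinarith [mul_nonneg (by positivity : 0 ≤ σ ^ 2 / 2 * m ^ 2) (neg_nonneg.2 hV''m),
    mul_pos hr (sub_pos.2 hmV)]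

theorem eq_sub_of_lt_of_eq_sub (hr : 0 < r) (hq : 0 ≤ q)
    (hVI : ∀ S : ℝ, 0 < S → min (negL r q σ V V' V'' S) (V S - max (E - S) 0) = 0)
    (hlim : Tendsto V (𝓝[>] 0) (𝓝 E)) {b c : ℝ} (hb : 0 < b) (hbc : b < c) (hcE : c < E)
    (hcV : V c = E - c) : V b = E - b := by
  set W : ℝ → ℝ := fun x => V x - (E - x)
  have hc : 0 < c := hb.trans hbc
  have hWnonneg : ∀ x ∈ Ioo 0 E, 0 ≤ W x := fun x hx => by
    have := payoff_le (hVI x hx.1)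
    rw [max_eq_left (sub_nonneg.2 hx.2.le)] at this
    exact sub_nonneg.2 this
  have hWc : W c = 0 := sub_eq_zero.2 hcV
  have hmin : IsLocalMin W c := by
    filter_upwards [Ioo_mem_nhds hc hcE] with x hx using hWc.trans_le (hWnonneg x hx)
  have hqc := le_of_isLocalMin_sub_payoff hV' hV'' hc hmin hcV (negL_nonneg (hVI c hc))
  by_contra hne
  have hWb : 0 < W b :=
    (hWnonneg b ⟨hb, hbc.trans hcE⟩).lt_of_ne fun h => hne (by linarith [h.symm])
  have hlimW : Tendsto W (𝓝[>] 0) (𝓝 0) := by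
    simpa using hlim.sub
      (((continuous_sub_left E).tendsto' 0 E (sub_zero E)).mono_left nhdsWithin_le_nhds)
  have hcont : ContinuousOn W (Ioc 0 c) := fun x hx =>
    (eventually_hasDerivAt_sub_payoff hV' hx.1).self_of_nhds.continuousAt.continuousWithinAt
  obtain ⟨m, hm, hmax, hWbm⟩ :=
    exists_isLocalMax_Ioo_of_tendsto_nhdsGT hb hbc hcont hlimW hWb (hWc ▸ hWb)
  have hmV : E - m < V m := sub_pos.1 (hWb.trans_le hWbm)
  have hL := negL_eq_zero_of_payoff_lt (hVI m hm.1)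
    (by rwa [max_eq_left (by linarith [hm.2] : 0 ≤ E - m)])
  have := lt_of_isLocalMax_sub_payoff hV' hV'' hr hm.1 hmax hmV hL
  nlinarith [mul_le_mul_of_nonneg_left hm.2.le hq]

end Derivatives

end PerpetualPut

theorem exists_optimal_exercise_boundary_general
    (r q σ E : ℝ) (hr : 0 < r) (hq : 0 ≤ q) (hE : 0 < E)
    (V V' V'' : ℝ → ℝ)
    (hV' : ∀ S : ℝ, 0 < S → HasDerivAt V (V' S) S)
    (hV'' : ∀ S : ℝ, 0 < S → HasDerivAt V' (V'' S) S)
    (hpos : ∀ S : ℝ, 0 < S → 0 < V S)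
    (hVI : ∀ S : ℝ, 0 < S →
      min (negL r q σ V V' V'' S) (V S - max (E - S) 0) = 0)
    (hlim : Filter.Tendsto V (nhdsWithin 0 (Set.Ioi 0)) (nhds E)) :
    ∃ S₀ : ℝ, 0 ≤ S₀ ∧ S₀ ≤ E ∧
      (∀ S : ℝ, 0 < S → S < S₀ → V S = max (E - S) 0) ∧
      (∀ S : ℝ, S₀ < S → max (E - S) 0 < V S) := by
  obtain ⟨S₀, ⟨hS₀, hS₀E⟩, hcontact, hfree⟩ :=
    exists_Ioo_subset_subset_Iic (C := {S | 0 < S ∧ S < E ∧ V S = E - S}) hE.le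
      (fun S hS => ⟨hS.1.le, hS.2.1.le⟩) fun c hc b hb hbc =>
        ⟨hb, hbc.trans hc.2.1,
          PerpetualPut.eq_sub_of_lt_of_eq_sub hV' hV'' hr hq hVI hlim hb hbc hc.2.1 hc.2.2⟩
  refine ⟨S₀, hS₀, hS₀E, fun S hS hSS₀ => ?_, fun S hS => ?_⟩
  · obtain ⟨-, hSE, hVS⟩ := hcontact ⟨hS, hSS₀⟩
    rw [hVS, max_eq_left (by linarith)]
  · have hS0 : 0 < S := hS₀.trans_lt hS
    refine (PerpetualPut.payoff_le (hVI S hS0)).lt_of_ne fun heq => ?_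
    rcases lt_or_ge S E with hSE | hES
    · rw [max_eq_left (by linarith)] at heq
      exact (hfree ⟨hS0, hSE, heq.symm⟩ : S ≤ S₀).not_gt hS
    · rw [max_eq_right (by linarith)] at heq
      exact (hpos S hS0).ne heq

/-- Existence of the optimal exercise boundary: for a positive solution `V` of the
perpetual American put variational inequality with `V(S) → E` as `S → 0⁺`, there exists
`S₀ ∈ [0, E]` such that `V(S) = (E−S)⁺` for `0 < S < S₀` and `V(S) > (E−S)⁺` for `S > S₀`. -/
theorem exists_optimal_exercise_boundary
    (r q σ E : ℝ) (hr : 0 < r) (hq : 0 ≤ q) (hσ : 0 < σ) (hE : 0 < E)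
    (V V' V'' : ℝ → ℝ)
    (hV' : ∀ S : ℝ, 0 < S → HasDerivAt V (V' S) S)
    (hV'' : ∀ S : ℝ, 0 < S → HasDerivAt V' (V'' S) S)
    (hpos : ∀ S : ℝ, 0 < S → 0 < V S)
    (hVI : ∀ S : ℝ, 0 < S →
      min (negL r q σ V V' V'' S) (V S - max (E - S) 0) = 0)
    (hlim : Filter.Tendsto V (nhdsWithin 0 (Set.Ioi 0)) (nhds E)) :
    ∃ S₀ : ℝ, 0 ≤ S₀ ∧ S₀ ≤ E ∧
      (∀ S : ℝ, 0 < S → S < S₀ → V S = max (E - S) 0) ∧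
      (∀ S : ℝ, S₀ < S → max (E - S) 0 < V S) :=
  exists_optimal_exercise_boundary_general r q σ E hr hq hE V V' V'' hV' hV'' hpos hVI hlim
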